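/- Let p be a prime and a a positive integer, and let A be the adjacency matrix of the modified divisor prime graph G*_Dp(p^a). Then (1 + √(4a+1))/2 and (1 − √(4a+1))/2 are eigenvalues of A, and the rank of A equals 2 (equivalently, 0 is an eigenvalue of multiplicity a − 1). -/

import Mathlib

/-!
The divisors of `p ^ a` are `1, p, …, p ^ a`, and two of them are coprime exactly when one of
them is `1`. So `A` is the adjacency matrix of the star `K_{1,a}` centred at `1`, with a loop at
the centre. Its rows are the all-ones vector (at the centre) and the indicator of the centre
(elsewhere), hence `rank A = 2`; and `(λ, 1, …, 1)` is an eigenvector as soon as `λ² = λ + a`.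
-/

namespace Matrix

variable {ι R : Type*} [DecidableEq ι] (o : ι)

def loopedStar [Zero R] [One R] : Matrix ι ι R :=
  of fun u v => if u = o ∨ v = o then 1 else 0

theorem loopedStar_apply [Zero R] [One R] (u v : ι) :
    (loopedStar o : Matrix ι ι R) u v = if u = o ∨ v = o then 1 else 0 := rfl

theorem loopedStar_row_self [Zero R] [One R] : (loopedStar o : Matrix ι ι R) o = 1 := by
  ext v
  simp [loopedStar_apply]

theorem loopedStar_row_of_ne [Zero R] [One R] {u : ι} (hu : u ≠ o) :
    (loopedStar o : Matrix ι ι R) u = Pi.single o 1 := by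
  ext v
  by_cases hv : v = o <;> simp [loopedStar_apply, hu, hv]

theorem loopedStar_mulVec_apply [Semiring R] [Fintype ι] (Y : ι → R) (u : ι) :
    (loopedStar o *ᵥ Y) u = if u = o then ∑ v, Y v else Y o := by
  split_ifs with hu
  · rw [mulVec, hu, loopedStar_row_self, one_dotProduct]
  · rw [mulVec, loopedStar_row_of_ne o hu, single_one_dotProduct]

section CommRing

variable [CommRing R] [Fintype ι]

theorem loopedStar_mulVec_eq_smul {μ : R} (hμ : μ * μ = μ + (Fintype.card ι - 1)) :
    loopedStar o *ᵥ (1 + Pi.single o (μ - 1) : ι → R) =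
      μ • (1 + Pi.single o (μ - 1) : ι → R) := by
  ext u
  rw [loopedStar_mulVec_apply]
  split_ifs with hu
  · subst hu
    simp only [Pi.add_apply, Pi.one_apply, Finset.sum_add_distrib, Finset.sum_const,
      Finset.card_univ, nsmul_eq_mul, mul_one, Finset.sum_pi_single', Finset.mem_univ, if_true,
      Pi.single_eq_same, Pi.smul_apply, smul_eq_mul]
    linear_combination -hμ
  · simp [hu]

theorem exists_loopedStar_mulVec_eq_smul [Nontrivial R] [Nontrivial ι] {μ : R}
    (hμ : μ * μ = μ + (Fintype.card ι - 1)) :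
    ∃ Y : ι → R, Y ≠ 0 ∧ loopedStar o *ᵥ Y = μ • Y := by
  obtain ⟨v, hv⟩ := exists_ne o
  refine ⟨_, fun h => ?_, loopedStar_mulVec_eq_smul o hμ⟩
  simpa [hv] using congrFun h v

end CommRing

theorem range_row_loopedStar [Zero R] [One R] [Nontrivial ι] :
    Set.range (loopedStar o : Matrix ι ι R).row = Set.range ![1, Pi.single o 1] := by
  obtain ⟨v, hv⟩ := exists_ne o
  rw [range_cons_cons_empty]
  ext x
  constructor
  · rintro ⟨u, rfl⟩
    by_cases hu : u = o
    · exact Or.inl (by rw [row, hu, loopedStar_row_self])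
    · exact Or.inr (by rw [row, loopedStar_row_of_ne o hu]; rfl)
  · rintro (rfl | rfl)
    · exact ⟨o, loopedStar_row_self o⟩
    · exact ⟨v, loopedStar_row_of_ne o hv⟩

theorem linearIndependent_one_single_one [Ring R] [Nontrivial R] [Nontrivial ι] :
    LinearIndependent R ![(1 : ι → R), Pi.single o 1] := by
  obtain ⟨v, hv⟩ := exists_ne o
  rw [LinearIndependent.pair_iff]
  intro s t hst
  have hs : s = 0 := by simpa [hv] using congrFun hst v
  subst hs
  exact ⟨rfl, by simpa using congrFun hst o⟩

theorem rank_loopedStar [Field R] [Fintype ι] [Nontrivial ι] :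
    (loopedStar o : Matrix ι ι R).rank = 2 := by
  rw [rank_eq_finrank_span_row, range_row_loopedStar,
    finrank_span_eq_card (linearIndependent_one_single_one o), Fintype.card_fin]

end Matrix

theorem Nat.coprime_iff_eq_one_or_eq_one_of_dvd_prime_pow {p a u v : ℕ} (hp : p.Prime)
    (hu : u ∣ p ^ a) (hv : v ∣ p ^ a) : u.Coprime v ↔ u = 1 ∨ v = 1 := by
  obtain ⟨i, -, rfl⟩ := (Nat.dvd_prime_pow hp).mp hu
  obtain ⟨j, -, rfl⟩ := (Nat.dvd_prime_pow hp).mp hv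
  rcases Nat.eq_zero_or_pos i with rfl | hi
  · simp
  rcases Nat.eq_zero_or_pos j with rfl | hj
  · simp
  rw [Nat.coprime_pow_left_iff hi, Nat.coprime_pow_right_iff hj, Nat.coprime_self,
    Nat.pow_eq_one, Nat.pow_eq_one]
  simp [hi.ne', hj.ne']

/-- `(1 + √(4a+1))/2` and `(1 - √(4a+1))/2` are eigenvalues of the adjacency matrix `A`
of the modified divisor prime graph of `p ^ a`, and the rank of `A` equals `2`
(equivalently, `0` is an eigenvalue of multiplicity `a - 1`). -/
theorem eigenvalues_modifiedDivisorPrimeGraph_primePow (p a : ℕ) (hp : p.Prime) (ha : 0 < a)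
    (A : Matrix {d : ℕ // d ∈ (p ^ a).divisors} {d : ℕ // d ∈ (p ^ a).divisors} ℝ)
    (hA : ∀ u v : {d : ℕ // d ∈ (p ^ a).divisors},
      A u v = if Nat.gcd u.1 v.1 = 1 then 1 else 0) :
    (∃ Y : {d : ℕ // d ∈ (p ^ a).divisors} → ℝ, Y ≠ 0 ∧
        A.mulVec Y = ((1 + Real.sqrt (4 * (a : ℝ) + 1)) / 2) • Y) ∧
    (∃ Y : {d : ℕ // d ∈ (p ^ a).divisors} → ℝ, Y ≠ 0 ∧
        A.mulVec Y = ((1 - Real.sqrt (4 * (a : ℝ) + 1)) / 2) • Y) ∧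
    A.rank = 2 := by
  have hpa : p ^ a ≠ 0 := pow_ne_zero _ hp.ne_zero
  have hcard : Fintype.card {d : ℕ // d ∈ (p ^ a).divisors} = a + 1 := by
    rw [Fintype.card_coe, Nat.divisors_prime_pow hp, Finset.card_map, Finset.card_range]
  have : Nontrivial {d : ℕ // d ∈ (p ^ a).divisors} :=
    Fintype.one_lt_card_iff_nontrivial.mp (by omega)
  obtain rfl : A = Matrix.loopedStar ⟨1, Nat.one_mem_divisors.mpr hpa⟩ := by
    ext u v
    rw [hA, Matrix.loopedStar_apply]
    refine if_congr ?_ rfl rfl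
    rw [Subtype.ext_iff, Subtype.ext_iff]
    exact Nat.coprime_iff_eq_one_or_eq_one_of_dvd_prime_pow hp (Nat.dvd_of_mem_divisors u.2)
      (Nat.dvd_of_mem_divisors v.2)
  have hroot (s : ℝ) (hs : s * s = 4 * a + 1) :
      (1 + s) / 2 * ((1 + s) / 2) =
        (1 + s) / 2 + (Fintype.card {d : ℕ // d ∈ (p ^ a).divisors} - 1 : ℝ) := by
    rw [hcard]
    push_cast
    linear_combination hs / 4
  have hs := Real.mul_self_sqrt (show 0 ≤ 4 * (a : ℝ) + 1 by positivity)
  refine ⟨Matrix.exists_loopedStar_mulVec_eq_smul _ (hroot _ hs), ?_, Matrix.rank_loopedStar _⟩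
  simpa only [sub_eq_add_neg] using
    Matrix.exists_loopedStar_mulVec_eq_smul _ (hroot (-_) (by rw [neg_mul_neg, hs]))
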